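/- The quantity λ₀(n) is strictly increasing in the dimension: for all integers 1 ≤ m < n, one has λ₀(m) < λ₀(n). -/

import Mathlib

/-!
Differentiating termwise, `λ φ₀'(λ) - φ₀(λ) = ∑ⱼ (2j - 1) bⱼ λ^{2j}`, a series whose only negative
term is the constant `-1`. It is therefore nondecreasing in `λ ≥ 0`. Each `bⱼ` is nonincreasing in
the dimension and `b₁ = 1/(2n)` is strictly decreasing, so at a fixed `λ > 0` the series is strictly
smaller in dimension `n` than in dimension `m < n`. If `λ₀(n) ≤ λ₀(m)`, evaluating at the two roots
gives `0 ≤ (value at λ₀(m) in dimension n) < 0`.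
-/

open Real Filter

noncomputable def b (n : ℕ) (j : ℕ) : ℝ :=
  ∏ ℓ ∈ Finset.Icc 1 j, 1 / (2 * (ℓ : ℝ) * ((n : ℝ) + 2 * ((ℓ : ℝ) - 1)))

noncomputable def phi0 (n : ℕ) (ρ : ℝ) : ℝ := ∑' j : ℕ, b n j * ρ ^ (2 * j)

lemma b_zero (n : ℕ) : b n 0 = 1 := by simp [b]

lemma b_succ (n j : ℕ) : b n (j + 1) = b n j / (2 * ((j : ℝ) + 1) * (n + 2 * j)) := by
  rw [b, b, Finset.prod_Icc_succ_top (Nat.le_add_left 1 j)]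
  push_cast
  ring

lemma b_one (n : ℕ) : b n 1 = 1 / (2 * n) := by
  simpa [b_zero] using b_succ n 0

lemma b_nonneg (n j : ℕ) : 0 ≤ b n j := by
  refine Finset.prod_nonneg fun ℓ hℓ => ?_
  have : (1 : ℝ) ≤ ℓ := by exact_mod_cast (Finset.mem_Icc.mp hℓ).1
  have : (0 : ℝ) ≤ n + 2 * ((ℓ : ℝ) - 1) := by linarith
  positivity

lemma b_le_b_of_le {m n : ℕ} (hm : 1 ≤ m) (hmn : m ≤ n) (j : ℕ) : b n j ≤ b m j := by
  refine Finset.prod_le_prod (fun ℓ hℓ => ?_) (fun ℓ hℓ => ?_)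
  all_goals
    have hℓ : (1 : ℝ) ≤ ℓ := by exact_mod_cast (Finset.mem_Icc.mp hℓ).1
    have hm : (1 : ℝ) ≤ m := by exact_mod_cast hm
    have hmn : (m : ℝ) ≤ n := by exact_mod_cast hmn
  · have : (0 : ℝ) ≤ n + 2 * ((ℓ : ℝ) - 1) := by linarith
    positivity
  · have : (0 : ℝ) < m + 2 * ((ℓ : ℝ) - 1) := by linarith
    gcongr

lemma b_le_inv_factorial {n : ℕ} (hn : 1 ≤ n) (j : ℕ) : b n j ≤ (j.factorial : ℝ)⁻¹ := by
  induction j with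
  | zero => simp [b_zero]
  | succ j ih =>
    have hn : (1 : ℝ) ≤ n := by exact_mod_cast hn
    rw [b_succ, Nat.factorial_succ, Nat.cast_mul, Nat.cast_succ, mul_inv_rev, div_eq_mul_inv]
    gcongr
    nlinarith [(Nat.cast_nonneg j : (0 : ℝ) ≤ j)]

lemma summable_b_mul_pow {n : ℕ} (hn : 1 ≤ n) (x : ℝ) :
    Summable fun j => b n j * x ^ (2 * j) := by
  refine .of_nonneg_of_le (fun j => ?_) (fun j => ?_) (summable_pow_div_factorial (x ^ 2))
  · exact mul_nonneg (b_nonneg n j) ((even_two_mul j).pow_nonneg x)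
  · rw [pow_mul, div_eq_inv_mul]
    gcongr
    exact b_le_inv_factorial hn j

lemma abs_natCast_mul_pow_pred_le {k : ℕ} {y R : ℝ} (hR : 1 ≤ R) (hy : |y| ≤ R) :
    |(k : ℝ) * y ^ (k - 1)| ≤ (2 * R) ^ k := by
  have hk : (k : ℝ) ≤ 2 ^ k := by exact_mod_cast Nat.lt_two_pow_self.le
  calc |(k : ℝ) * y ^ (k - 1)| = k * |y| ^ (k - 1) := by rw [abs_mul, abs_pow, Nat.abs_cast]
    _ ≤ 2 ^ k * R ^ k := by
        gcongr
        exact (pow_le_pow_left₀ (abs_nonneg y) hy _).trans (pow_le_pow_right₀ hR (k.sub_le 1))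
    _ = (2 * R) ^ k := (mul_pow 2 R k).symm

lemma norm_b_mul_deriv_pow_le (n j : ℕ) {y R : ℝ} (hR : 1 ≤ R) (hy : |y| ≤ R) :
    ‖b n j * (((2 * j : ℕ) : ℝ) * y ^ (2 * j - 1))‖ ≤ b n j * (2 * R) ^ (2 * j) := by
  rw [Real.norm_eq_abs, abs_mul, abs_of_nonneg (b_nonneg n j)]
  exact mul_le_mul_of_nonneg_left (abs_natCast_mul_pow_pred_le hR hy) (b_nonneg n j)

lemma hasDerivAt_phi0 {n : ℕ} (hn : 1 ≤ n) (x : ℝ) :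
    HasDerivAt (phi0 n) (∑' j, b n j * (((2 * j : ℕ) : ℝ) * x ^ (2 * j - 1))) x := by
  set R := |x| + 1
  have hx : x ∈ Metric.ball 0 R := by simp [R]
  refine hasDerivAt_tsum_of_isPreconnected (summable_b_mul_pow hn (2 * R)) Metric.isOpen_ball
    (convex_ball 0 R).isPreconnected (fun j y _ => (hasDerivAt_pow (2 * j) y).const_mul (b n j))
    (fun j y hy => norm_b_mul_deriv_pow_le n j (by simp [R]) ?_) hx (summable_b_mul_pow hn x) hx
  simpa using (mem_ball_zero_iff.mp hy).le

lemma summable_b_mul_deriv_pow {n : ℕ} (hn : 1 ≤ n) (x : ℝ) :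
    Summable fun j => b n j * (((2 * j : ℕ) : ℝ) * x ^ (2 * j - 1)) :=
  .of_norm_bounded (summable_b_mul_pow hn (2 * (|x| + 1)))
    fun j => norm_b_mul_deriv_pow_le n j (by simp) (by simp)

noncomputable def phi0Defect (n : ℕ) (x : ℝ) : ℝ :=
  ∑' j : ℕ, (2 * (j : ℝ) - 1) * b n j * x ^ (2 * j)

lemma mul_b_mul_deriv_pow_sub (n j : ℕ) (x : ℝ) :
    x * (b n j * (((2 * j : ℕ) : ℝ) * x ^ (2 * j - 1))) - b n j * x ^ (2 * j)
      = (2 * (j : ℝ) - 1) * b n j * x ^ (2 * j) := by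
  cases j with
  | zero => simp
  | succ j =>
    rw [show 2 * (j + 1) - 1 = 2 * j + 1 by omega, show 2 * (j + 1) = 2 * j + 1 + 1 by omega]
    push_cast
    ring

lemma mul_deriv_phi0_sub_phi0 {n : ℕ} (hn : 1 ≤ n) (x : ℝ) :
    x * deriv (phi0 n) x - phi0 n x = phi0Defect n x := by
  rw [(hasDerivAt_phi0 hn x).deriv, phi0, ← tsum_mul_left,
    ← ((summable_b_mul_deriv_pow hn x).mul_left x).tsum_sub (summable_b_mul_pow hn x)]
  exact tsum_congr fun j => mul_b_mul_deriv_pow_sub n j x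

lemma summable_phi0Defect {n : ℕ} (hn : 1 ≤ n) (x : ℝ) :
    Summable fun j : ℕ => (2 * (j : ℝ) - 1) * b n j * x ^ (2 * j) := by
  simpa only [mul_b_mul_deriv_pow_sub] using
    ((summable_b_mul_deriv_pow hn x).mul_left x).sub (summable_b_mul_pow hn x)

lemma two_mul_natCast_succ_sub_one_nonneg (j : ℕ) : (0 : ℝ) ≤ 2 * ((j + 1 : ℕ) : ℝ) - 1 := by
  push_cast
  linarith [(j.cast_nonneg : (0 : ℝ) ≤ j)]

lemma phi0Defect_le_of_le {n : ℕ} (hn : 1 ≤ n) {x y : ℝ} (hx : 0 ≤ x) (hxy : x ≤ y) :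
    phi0Defect n x ≤ phi0Defect n y := by
  refine (summable_phi0Defect hn x).tsum_le_tsum (fun j => ?_) (summable_phi0Defect hn y)
  cases j with
  | zero => simp
  | succ j =>
    have := b_nonneg n (j + 1)
    have := two_mul_natCast_succ_sub_one_nonneg j
    gcongr

lemma phi0Defect_lt_of_lt {m n : ℕ} (hm : 1 ≤ m) (hmn : m < n) {x : ℝ} (hx : 0 < x) :
    phi0Defect n x < phi0Defect m x := by
  have hn : 1 ≤ n := hm.trans hmn.le
  refine (summable_phi0Defect hn x).tsum_lt_tsum (i := 1) (fun j => ?_) ?_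
    (summable_phi0Defect hm x)
  · cases j with
    | zero => simp [b_zero]
    | succ j =>
      have := two_mul_natCast_succ_sub_one_nonneg j
      gcongr
      exact b_le_b_of_le hm hmn.le _
  · have hm : (0 : ℝ) < m := by exact_mod_cast hm
    have hmn : (m : ℝ) < n := by exact_mod_cast hmn
    simp only [b_one, Nat.cast_one]
    gcongr

/-- `λ₀(n)` is strictly increasing in the dimension: if `λ₀(m)` and `λ₀(n)` are the
(unique) positive roots of `λ φ₀'(λ) = φ₀(λ)` in dimensions `m < n`, then `λ₀(m) < λ₀(n)`. -/
theorem stmt4 (m n : ℕ) (hm : 1 ≤ m) (hmn : m < n) (lm ln : ℝ)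
    (hlm : 0 < lm) (hln : 0 < ln)
    (heqm : lm * deriv (phi0 m) lm = phi0 m lm)
    (heqn : ln * deriv (phi0 n) ln = phi0 n ln) :
    lm < ln := by
  have hn : 1 ≤ n := hm.trans hmn.le
  have hdm : phi0Defect m lm = 0 := by rw [← mul_deriv_phi0_sub_phi0 hm, heqm, sub_self]
  have hdn : phi0Defect n ln = 0 := by rw [← mul_deriv_phi0_sub_phi0 hn, heqn, sub_self]
  by_contra! hle
  linarith [phi0Defect_le_of_le hn hln.le hle, phi0Defect_lt_of_lt hm hmn hlm]
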